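/- arXiv:1705.07982 — 10 statements merged into one kernel-verified Lean document; each statement's English description precedes it below -/
import Mathlib

section
/- Let H be a UCG with induced covering {P_1,...,P_k} of P = ⟨CP(H)⟩ (via D_1 = {x_1,...,x_k}), and suppose {P_1,...,P_{k''}} is a subcovering with associated vertices p̃_1,...,p̃_{k''} such that p̃_i ∈ P_i and p̃_i ∉ P_j for j ≠ i. Then any shortest (x_i, p̃_i)-path and any shortest (x_j, p̃_j)-path are vertex-disjoint whenever i ≠ j. -/
open SimpleGraph

variable {V : Type*} {ι : Type*}

/-- Eccentricity (in `ℕ∞`) of a vertex. -/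
noncomputable def gecc (G : SimpleGraph V) (v : V) : ℕ∞ := ⨆ u, G.edist v u

/-- Radius of a graph. -/
noncomputable def grad (G : SimpleGraph V) : ℕ∞ := ⨅ v, gecc G v

/-- Diameter of a graph. -/
noncomputable def gdiam (G : SimpleGraph V) : ℕ∞ := ⨆ v, gecc G v

/-- The center: vertices of minimum eccentricity. -/
def gcenter (G : SimpleGraph V) : Set V := {v | gecc G v = grad G}

/-- Eccentric vertices of `v`. -/
def eccSet (G : SimpleGraph V) (v : V) : Set V := {u | G.edist v u = gecc G v}

/-- The centered periphery. -/
def cperiph (G : SimpleGraph V) : Set V := ⋃ z ∈ gcenter G, eccSet G z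

/-- Uniform central graph. -/
def IsUCG (G : SimpleGraph V) : Prop := ∀ c ∈ gcenter G, eccSet G c = cperiph G

/-- Condition A. -/
def CondA (G : SimpleGraph V) (P : ι → Set V) : Prop :=
  ∀ i, ∃ p, p ∉ P i ∧ ∀ q ∈ P i, 2 ≤ G.edist q p

/-- Condition B. -/
def CondB (G : SimpleGraph V) (P : ι → Set V) : Prop :=
  ∀ i, ∀ p ∈ P i,
    (∃ p', p' ∉ P i ∧ 3 ≤ G.edist p p') ∨ (∃ j, j ≠ i ∧ ∀ q ∈ P j, 2 ≤ G.edist p q)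

/-- Condition A′. -/
def CondA' (G : SimpleGraph V) (P : ι → Set V) : Prop :=
  ∀ i, (∃ p, p ∉ P i ∧ ∀ q ∈ P i, 3 ≤ G.edist q p) ∨
    (∃ j, j ≠ i ∧ ∀ q ∈ P i, ∀ q' ∈ P j, 2 ≤ G.edist q q')

/-- Condition B′. -/
def CondB' (G : SimpleGraph V) (P : ι → Set V) : Prop :=
  ∀ i, ∀ p ∈ P i, ∃ j, j ≠ i ∧ ∀ q ∈ P j, 2 ≤ G.edist p q

/-- Minimum size of a covering satisfying condition A. -/
noncomputable def covA (G : SimpleGraph V) : ℕ :=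
  sInf {k | ∃ P : Fin k → Set V, (⋃ i, P i) = Set.univ ∧ CondA G P}

/-- Minimum size of a covering satisfying conditions A and B. -/
noncomputable def covAB (G : SimpleGraph V) : ℕ :=
  sInf {k | ∃ P : Fin k → Set V, (⋃ i, P i) = Set.univ ∧ CondA G P ∧ CondB G P}

/-- Distance from a vertex to the center. -/
noncomputable def distToCenter (G : SimpleGraph V) (u : V) : ℕ∞ :=
  ⨅ z ∈ gcenter G, G.edist u z

/-- The set of vertices at distance exactly `m` from the center. -/
def Dlevel (G : SimpleGraph V) (m : ℕ) : Set V := {u | distToCenter G u = (m : ℕ∞)}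

/-- Vertices of the centered periphery lying on a radial path through `x`. -/
def Pset (G : SimpleGraph V) (r : ℕ) (x : V) : Set V :=
  {p | p ∈ cperiph G ∧ ∃ c ∈ gcenter G, ∃ W : G.Walk c p,
    W.IsPath ∧ W.length = r ∧ x ∈ W.support}

/-- All vertices lying on some radial path through `x`. -/
def radialSupport (G : SimpleGraph V) (r : ℕ) (x : V) : Set V :=
  {u | ∃ c ∈ gcenter G, ∃ p ∈ cperiph G, ∃ W : G.Walk c p,
    W.IsPath ∧ W.length = r ∧ x ∈ W.support ∧ u ∈ W.support}

/-- Any central vertex is at distance `r` from any vertex of the centered periphery. -/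
lemma center_dist_periph {G : SimpleGraph V} (hUCG : IsUCG G) {r : ℕ} (hr : grad G = (r : ℕ∞))
    {z p : V} (hz : z ∈ gcenter G) (hp : p ∈ cperiph G) : G.dist z p = r := by
  have h1 : eccSet G z = cperiph G := hUCG z hz
  have h2 : p ∈ eccSet G z := h1 ▸ hp
  have h3 : G.edist z p = gecc G z := h2
  have h4 : G.edist z p = (r : ℕ∞) := by rw [h3, hz, hr]
  simp [SimpleGraph.dist, h4]

/-- A vertex at level 1 has a central neighbour, at distance `1`. -/
lemma exists_center_adj {G : SimpleGraph V} {x : V} (hx : x ∈ Dlevel G 1) :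
    ∃ z ∈ gcenter G, G.Adj z x := by
  by_contra h
  push_neg at h
  have h2 : (2 : ℕ∞) ≤ distToCenter G x := by
    refine le_iInf₂ fun z hz => ?_
    have hne : G.edist x z ≠ 1 := by
      intro h1
      exact h z hz ((SimpleGraph.edist_eq_one_iff_adj.mp h1).symm)
    have hne0 : G.edist x z ≠ 0 := by
      intro h0
      have hxz : x = z := SimpleGraph.edist_eq_zero_iff.mp h0
      have : distToCenter G x ≤ G.edist x z := iInf₂_le z hz
      rw [hx, h0] at this
      simp at this
    have h1le : 1 ≤ G.edist x z := Order.one_le_iff_pos.mpr (pos_iff_ne_zero.mpr hne0)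
    have : 1 < G.edist x z := lt_of_le_of_ne h1le (Ne.symm hne)
    exact Order.add_one_le_of_lt this
  rw [hx] at h2
  exact absurd h2 (by decide)

/-- Splitting a geodesic walk at an interior vertex gives two geodesics. -/
lemma split_geodesic [DecidableEq V] {G : SimpleGraph V} (hconn : G.Connected) {u w : V} (W : G.Walk u w)
    (hW : W.length = G.dist u w) {v : V} (hv : v ∈ W.support) :
    (W.takeUntil v hv).length = G.dist u v ∧ (W.dropUntil v hv).length = G.dist v w := by
  have hsum : (W.takeUntil v hv).length + (W.dropUntil v hv).length = W.length := by
    rw [← SimpleGraph.Walk.length_append, SimpleGraph.Walk.take_spec]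
  have h1 := SimpleGraph.dist_le (W.takeUntil v hv)
  have h2 := SimpleGraph.dist_le (W.dropUntil v hv)
  have h3 : G.dist u w ≤ G.dist u v + G.dist v w := hconn.dist_triangle
  omega

set_option maxHeartbeats 400000 in
/-- Shortest paths from `x_i` to its uniquely-owned peripheral vertex and from `x_j` to its
uniquely-owned peripheral vertex are vertex disjoint when `i ≠ j`. -/
theorem stmt3 (G : SimpleGraph V) (hconn : G.Connected) (hUCG : IsUCG G)
    {r : ℕ} (hr : grad G = (r : ℕ∞))
    {x₁ x₂ p₁ p₂ : V} (hx₁ : x₁ ∈ Dlevel G 1) (hx₂ : x₂ ∈ Dlevel G 1) (hne : x₁ ≠ x₂)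
    (hp₁ : p₁ ∈ Pset G r x₁) (hp₂ : p₂ ∈ Pset G r x₂)
    (hp₁₂ : p₁ ∉ Pset G r x₂) (hp₂₁ : p₂ ∉ Pset G r x₁)
    (W₁ : G.Walk x₁ p₁) (W₂ : G.Walk x₂ p₂) (hW₁ : W₁.IsPath) (hW₂ : W₂.IsPath)
    (hl₁ : (W₁.length : ℕ∞) = G.edist x₁ p₁) (hl₂ : (W₂.length : ℕ∞) = G.edist x₂ p₂) :
    ∀ v, v ∈ W₁.support → v ∉ W₂.support := by
  classical
  intro v hv₁ hv₂
  -- central neighbours of x₁ and x₂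
  obtain ⟨z₁, hz₁, hadj₁⟩ := exists_center_adj hx₁
  obtain ⟨z₂, hz₂, hadj₂⟩ := exists_center_adj hx₂
  obtain ⟨hp₁per, c₁, hc₁, R₁, hR₁path, hR₁len, hx₁R⟩ := hp₁
  obtain ⟨hp₂per, c₂, hc₂, R₂, hR₂path, hR₂len, hx₂R⟩ := hp₂
  -- basic distances
  have hz₁p₂ : G.dist z₁ p₂ = r := center_dist_periph hUCG hr hz₁ hp₂per
  have hz₂p₁ : G.dist z₂ p₁ = r := center_dist_periph hUCG hr hz₂ hp₁per
  have hz₂p₂ : G.dist z₂ p₂ = r := center_dist_periph hUCG hr hz₂ hp₂per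
  have hc₁p₁ : G.dist c₁ p₁ = r := center_dist_periph hUCG hr hc₁ hp₁per
  have hc₂p₂ : G.dist c₂ p₂ = r := center_dist_periph hUCG hr hc₂ hp₂per
  have hz₁x₁ : G.dist z₁ x₁ = 1 := SimpleGraph.dist_eq_one_iff_adj.mpr hadj₁
  have hz₂x₂ : G.dist z₂ x₂ = 1 := SimpleGraph.dist_eq_one_iff_adj.mpr hadj₂
  -- x₁ ≠ c₁ and x₂ ≠ c₂
  have hxc : ∀ x c : V, x ∈ Dlevel G 1 → c ∈ gcenter G → 1 ≤ G.dist c x := by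
    intro x c hx hc
    have h1 : distToCenter G x ≤ G.edist x c := iInf₂_le c hc
    rw [hx] at h1
    have hne : c ≠ x := by
      rintro rfl
      simp [SimpleGraph.edist_self] at h1
    have := hconn.pos_dist_of_ne hne
    omega
  have hc₁x₁ : 1 ≤ G.dist c₁ x₁ := hxc x₁ c₁ hx₁ hc₁
  have hc₂x₂ : 1 ≤ G.dist c₂ x₂ := hxc x₂ c₂ hx₂ hc₂
  -- the radial paths are geodesics
  have hR₁geo : R₁.length = G.dist c₁ p₁ := by rw [hR₁len, hc₁p₁]
  have hR₂geo : R₂.length = G.dist c₂ p₂ := by rw [hR₂len, hc₂p₂]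
  obtain ⟨hA, hB⟩ := split_geodesic hconn R₁ hR₁geo hx₁R
  obtain ⟨hA', hB'⟩ := split_geodesic hconn R₂ hR₂geo hx₂R
  have hsplit₁ : G.dist c₁ x₁ + G.dist x₁ p₁ = r := by
    rw [← hA, ← hB, ← SimpleGraph.Walk.length_append, SimpleGraph.Walk.take_spec, hR₁len]
  have hsplit₂ : G.dist c₂ x₂ + G.dist x₂ p₂ = r := by
    rw [← hA', ← hB', ← SimpleGraph.Walk.length_append, SimpleGraph.Walk.take_spec, hR₂len]
  -- dist x₁ p₁ = r - 1, dist x₂ p₂ = r - 1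
  have htr₁ : G.dist z₁ p₁ ≤ G.dist z₁ x₁ + G.dist x₁ p₁ := hconn.dist_triangle
  have hz₁p₁ : G.dist z₁ p₁ = r := center_dist_periph hUCG hr hz₁ hp₁per
  have hx₁p₁ : G.dist x₁ p₁ + 1 = r := by omega
  have htr₂ : G.dist z₂ p₂ ≤ G.dist z₂ x₂ + G.dist x₂ p₂ := hconn.dist_triangle
  have hx₂p₂ : G.dist x₂ p₂ + 1 = r := by omega
  -- lengths of W₁, W₂
  have hW₁len : W₁.length = G.dist x₁ p₁ := by
    have : G.dist x₁ p₁ = ((W₁.length : ℕ∞)).toNat := by rw [hl₁]; rfl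
    simpa using this.symm
  have hW₂len : W₂.length = G.dist x₂ p₂ := by
    have : G.dist x₂ p₂ = ((W₂.length : ℕ∞)).toNat := by rw [hl₂]; rfl
    simpa using this.symm
  -- split W₁ and W₂ at v
  obtain ⟨hA₁, hB₁⟩ := split_geodesic hconn W₁ hW₁len hv₁
  obtain ⟨hA₂, hB₂⟩ := split_geodesic hconn W₂ hW₂len hv₂
  have hs₁ : (W₁.takeUntil v hv₁).length + (W₁.dropUntil v hv₁).length = W₁.length := by
    rw [← SimpleGraph.Walk.length_append, SimpleGraph.Walk.take_spec]
  have hs₂ : (W₂.takeUntil v hv₂).length + (W₂.dropUntil v hv₂).length = W₂.length := by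
    rw [← SimpleGraph.Walk.length_append, SimpleGraph.Walk.take_spec]
  -- key triangle inequalities through v
  have hk₁ : G.dist z₂ p₁ ≤ G.dist z₂ x₂ + G.dist x₂ v + G.dist v p₁ := by
    calc G.dist z₂ p₁ ≤ G.dist z₂ v + G.dist v p₁ := hconn.dist_triangle
    _ ≤ G.dist z₂ x₂ + G.dist x₂ v + G.dist v p₁ := by
        have : G.dist z₂ v ≤ G.dist z₂ x₂ + G.dist x₂ v := hconn.dist_triangle
        omega
  have hk₂ : G.dist z₁ p₂ ≤ G.dist z₁ x₁ + G.dist x₁ v + G.dist v p₂ := by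
    calc G.dist z₁ p₂ ≤ G.dist z₁ v + G.dist v p₂ := hconn.dist_triangle
    _ ≤ G.dist z₁ x₁ + G.dist x₁ v + G.dist v p₂ := by
        have : G.dist z₁ v ≤ G.dist z₁ x₁ + G.dist x₁ v := hconn.dist_triangle
        omega
  -- pure distance equations
  have e₁ : G.dist x₁ v + G.dist v p₁ = G.dist x₁ p₁ := by
    rw [← hA₁, ← hB₁, hs₁, hW₁len]
  have e₂ : G.dist x₂ v + G.dist v p₂ = G.dist x₂ p₂ := by
    rw [← hA₂, ← hB₂, hs₂, hW₂len]
  have key : G.dist x₁ v + G.dist v p₂ + 1 = r := by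
    clear hs₁ hs₂ hA hB hA' hB' hA₁ hB₁ hA₂ hB₂ hR₁geo hR₂geo hR₁len hR₂len hW₁len hW₂len
      hl₁ hl₂ hR₁path hR₂path hW₁ hW₂ hv₁ hv₂ hx₁R hx₂R W₁ W₂ R₁ R₂
    omega
  -- build a radial path from z₁ through x₁ to p₂
  refine hp₂₁ ⟨hp₂per, z₁, hz₁,
    SimpleGraph.Walk.cons hadj₁ ((W₁.takeUntil v hv₁).append (W₂.dropUntil v hv₂)), ?_, ?_, ?_⟩
  · refine SimpleGraph.Walk.isPath_of_length_eq_dist _ ?_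
    rw [SimpleGraph.Walk.length_cons, SimpleGraph.Walk.length_append, hA₁, hB₂, hz₁p₂]
    exact key
  · rw [SimpleGraph.Walk.length_cons, SimpleGraph.Walk.length_append, hA₁, hB₂]
    exact key
  · rw [SimpleGraph.Walk.support_cons]
    exact List.mem_cons_of_mem _ (SimpleGraph.Walk.start_mem_support _)
end

section
/- Let H be a UCG with radius r and induced subcover structure as above: D''_m denotes the intersection of D_m with the union of all radial paths through x_1,...,x_{k''}, where {P_1,...,P_{k''}} is a subcovering with uniquely-owned vertices p̃_i. Then |D''_1| ≤ |D''_m| for all 1 ≤ m ≤ r−1. -/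
/-!
In a uniform central graph every center is at distance `r` from every vertex of the centered
periphery, so the `n`-th vertex of a radial path lies at distance exactly `n` from the center.
Hence the only vertex of `D₁` on a radial path through `xᵢ` is `xᵢ` itself, and `|D''₁| ≤ k''`.
Conversely, fix radial paths `Wᵢ` through `xᵢ` ending at `p̃ᵢ`; their vertices at level `m` are
distinct, since if those of `Wᵢ` and `Wⱼ` coincided, `Wᵢ` up to level `m` followed by `Wⱼ`
afterwards would be a walk of length `r` from a center to `p̃ⱼ`, hence a radial path through `xᵢ`,
contradicting that `p̃ⱼ` lies only on radial paths through `xⱼ`.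
-/

open SimpleGraph

variable {V : Type*} {ι : Type*}

section RadialWalks

variable {G : SimpleGraph V}

lemma edist_eq_grad_of_mem_gcenter (hUCG : IsUCG G) {z p : V} (hz : z ∈ gcenter G)
    (hp : p ∈ cperiph G) : G.edist z p = grad G := by
  have hpz : p ∈ eccSet G z := (hUCG z hz).symm ▸ hp
  exact hpz.trans hz

lemma le_edist_getVert {c p z : V} (W : G.Walk c p) {n : ℕ} (hn : n ≤ W.length)
    (hz : (W.length : ℕ∞) ≤ G.edist z p) : (n : ℕ∞) ≤ G.edist z (W.getVert n) := by
  have htail : G.edist (W.getVert n) p ≤ (W.length - n : ℕ) := by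
    simpa only [Walk.drop_length] using (W.drop n).edist_le
  have hsum : (n : ℕ∞) + (W.length - n : ℕ) ≤ G.edist z (W.getVert n) + (W.length - n : ℕ) :=
    calc (n : ℕ∞) + (W.length - n : ℕ) = W.length := by rw [← Nat.cast_add, Nat.add_sub_cancel' hn]
      _ ≤ G.edist z p := hz
      _ ≤ G.edist z (W.getVert n) + G.edist (W.getVert n) p := SimpleGraph.edist_triangle
      _ ≤ G.edist z (W.getVert n) + (W.length - n : ℕ) := add_le_add_right htail _
  exact (ENat.add_le_add_iff_right (ENat.natCast_ne_top _)).mp hsum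

lemma distToCenter_getVert (hUCG : IsUCG G) {c p : V} (hc : c ∈ gcenter G) (hp : p ∈ cperiph G)
    (W : G.Walk c p) (hW : (W.length : ℕ∞) = grad G) {n : ℕ} (hn : n ≤ W.length) :
    distToCenter G (W.getVert n) = n := by
  refine le_antisymm ?_ (le_iInf₂ fun z hz => ?_)
  · calc distToCenter G (W.getVert n) ≤ G.edist (W.getVert n) c := iInf₂_le c hc
      _ = G.edist c (W.getVert n) := edist_comm
      _ ≤ (W.take n).length := (W.take n).edist_le
      _ = n := by rw [Walk.take_length, min_eq_left hn]
  · rw [edist_comm]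
    exact le_edist_getVert W hn (by rw [hW, edist_eq_grad_of_mem_gcenter hUCG hz hp])

lemma eq_getVert_of_distToCenter_eq (hUCG : IsUCG G) {c p : V} (hc : c ∈ gcenter G)
    (hp : p ∈ cperiph G) (W : G.Walk c p) (hW : (W.length : ℕ∞) = grad G) {u : V}
    (hu : u ∈ W.support) {n : ℕ} (hun : distToCenter G u = n) : u = W.getVert n := by
  obtain ⟨a, rfl, ha⟩ := Walk.mem_support_iff_exists_getVert.mp hu
  rw [distToCenter_getVert hUCG hc hp W hW ha, Nat.cast_inj] at hun
  rw [hun]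

lemma dlevel_one_inter_radialSupport_subset (hUCG : IsUCG G) {r : ℕ} (hr : grad G = r) {x : V}
    (hx : x ∈ Dlevel G 1) : Dlevel G 1 ∩ radialSupport G r x ⊆ {x} := by
  rintro u ⟨hu, c, hc, p, hp, W, -, hWr, hxW, huW⟩
  have hW : (W.length : ℕ∞) = grad G := by rw [hWr, hr]
  rw [Set.mem_singleton_iff, eq_getVert_of_distToCenter_eq hUCG hc hp W hW huW hu,
    eq_getVert_of_distToCenter_eq hUCG hc hp W hW hxW hx]

lemma mem_Pset_of_getVert_eq (hUCG : IsUCG G) {r : ℕ} (hr : grad G = r) {x c p c' p' : V}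
    (hx : x ∈ Dlevel G 1) (hc : c ∈ gcenter G) (hp : p ∈ cperiph G) (hp' : p' ∈ cperiph G)
    (W : G.Walk c p) (hWr : W.length = r) (hxW : x ∈ W.support)
    (W' : G.Walk c' p') (hW'r : W'.length = r) {m : ℕ} (hm1 : 1 ≤ m) (hmr : m ≤ r)
    (hmeet : W'.getVert m = W.getVert m) : p' ∈ Pset G r x := by
  let Q : G.Walk c p' := (W.take m).append ((W'.drop m).copy hmeet rfl)
  have hQr : Q.length = r := by
    simp only [Q, Walk.length_append, Walk.length_copy, Walk.take_length, Walk.drop_length]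
    omega
  have hxQ : x ∈ Q.support := by
    have hx1 : x = (W.take m).getVert 1 := by
      rw [Walk.take_getVert, min_eq_right hm1]
      exact eq_getVert_of_distToCenter_eq hUCG hc hp W (by rw [hWr, hr]) hxW hx
    exact hx1 ▸ Walk.support_subset_support_append_left _ _ ((W.take m).getVert_mem_support 1)
  refine ⟨hp', c, hc, Q, Q.isPath_of_length_eq_dist ?_, hQr, hxQ⟩
  rw [hQr, SimpleGraph.dist, edist_eq_grad_of_mem_gcenter hUCG hc hp', hr, ENat.toNat_natCast]

end RadialWalks

theorem stmt4_general [Fintype V] (G : SimpleGraph V) (hUCG : IsUCG G)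
    {r : ℕ} (hr : grad G = (r : ℕ∞))
    {k'' : ℕ} (x : Fin k'' → V)
    (hxD : ∀ i, x i ∈ Dlevel G 1)
    (ptil : Fin k'' → V)
    (hown : ∀ i, ptil i ∈ Pset G r (x i) ∧ ∀ j, j ≠ i → ptil i ∉ Pset G r (x j))
    {m : ℕ} (hm1 : 1 ≤ m) (hmr : m ≤ r - 1) :
    (Dlevel G 1 ∩ ⋃ i, radialSupport G r (x i)).ncard ≤
      (Dlevel G m ∩ ⋃ i, radialSupport G r (x i)).ncard := by
  have hD1 : Dlevel G 1 ∩ ⋃ i, radialSupport G r (x i) ⊆ Set.range x :=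
    calc Dlevel G 1 ∩ ⋃ i, radialSupport G r (x i)
        = ⋃ i, Dlevel G 1 ∩ radialSupport G r (x i) := Set.inter_iUnion _ _
      _ ⊆ ⋃ i, {x i} := Set.iUnion_mono fun i =>
          dlevel_one_inter_radialSupport_subset hUCG hr (hxD i)
      _ = Set.range x := Set.iUnion_singleton_eq_range x
  choose c hc W hWpath hWr hxW using fun i => (hown i).1.2
  have hper : ∀ i, ptil i ∈ cperiph G := fun i => (hown i).1.1
  let g : Fin k'' → V := fun i => (W i).getVert m
  have hgD : ∀ i, g i ∈ Dlevel G m ∩ ⋃ j, radialSupport G r (x j) := fun i =>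
    ⟨distToCenter_getVert hUCG (hc i) (hper i) (W i) (by rw [hWr i, hr]) (by rw [hWr i]; omega),
      Set.mem_iUnion.mpr ⟨i, c i, hc i, ptil i, hper i, W i, hWpath i, hWr i, hxW i,
        (W i).getVert_mem_support m⟩⟩
  have hg : Function.Injective g := fun i j hij => by_contra fun hne =>
    (hown j).2 i hne (mem_Pset_of_getVert_eq hUCG hr (hxD i) (hc i) (hper i) (hper j) (W i)
      (hWr i) (hxW i) (W j) (hWr j) hm1 (by omega) hij.symm)
  calc (Dlevel G 1 ∩ ⋃ i, radialSupport G r (x i)).ncard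
      ≤ (Set.range x).ncard := Set.ncard_le_ncard hD1
    _ ≤ k'' := by simpa only [Set.image_univ, Set.ncard_univ, Nat.card_fin] using
        Set.ncard_image_le (f := x) Set.finite_univ
    _ = (Set.range g).ncard := by rw [Set.ncard_range_of_injective hg, Nat.card_fin]
    _ ≤ (Dlevel G m ∩ ⋃ i, radialSupport G r (x i)).ncard :=
        Set.ncard_le_ncard (Set.range_subset_iff.mpr hgD)

/-- `|D''₁| ≤ |D''ₘ|` for `1 ≤ m ≤ r − 1`. -/
theorem stmt4 [Fintype V] (G : SimpleGraph V) (hconn : G.Connected) (hUCG : IsUCG G)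
    {r : ℕ} (hr : grad G = (r : ℕ∞))
    {k'' : ℕ} (x : Fin k'' → V) (hinj : Function.Injective x)
    (hxD : ∀ i, x i ∈ Dlevel G 1)
    (hcov : (⋃ i, Pset G r (x i)) = cperiph G)
    (ptil : Fin k'' → V)
    (hown : ∀ i, ptil i ∈ Pset G r (x i) ∧ ∀ j, j ≠ i → ptil i ∉ Pset G r (x j))
    {m : ℕ} (hm1 : 1 ≤ m) (hmr : m ≤ r - 1) :
    (Dlevel G 1 ∩ ⋃ i, radialSupport G r (x i)).ncard ≤
      (Dlevel G m ∩ ⋃ i, radialSupport G r (x i)).ncard :=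
  stmt4_general G hUCG hr x hxD ptil hown hm1 hmr
end

section
/- Let H be a UCG with radius r, P = ⟨CP(H)⟩, subcovering {P_1,...,P_{k''}} with uniquely-owned vertices p̃_i as in the subcover lemma. If |D''_1| = |D''_{r−1}|, then for each i there is a unique vertex y_i ∈ D''_{r−1} adjacent to every vertex of P_i, and y_i ≠ y_j when i ≠ j. -/
open SimpleGraph

variable {V : Type*} {ι : Type*}

section Aux
open SimpleGraph Walk

private lemma edist_getVert_le {G : SimpleGraph V} {a b : V} (W : G.Walk a b) (i : ℕ) :
    G.edist a (W.getVert i) ≤ (i : ℕ∞) := by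
  induction i with
  | zero => simp [W.getVert_zero]
  | succ n ih =>
    by_cases h : n < W.length
    · have hadj := W.adj_getVert_succ h
      calc G.edist a (W.getVert (n+1))
          ≤ G.edist a (W.getVert n) + G.edist (W.getVert n) (W.getVert (n+1)) :=
            G.edist_triangle
        _ ≤ (n : ℕ∞) + 1 := add_le_add ih (le_of_eq (edist_eq_one_iff_adj.mpr hadj))
        _ = ((n+1 : ℕ) : ℕ∞) := by push_cast; ring
    · rw [W.getVert_of_length_le (by omega : W.length ≤ n + 1),
        ← W.getVert_of_length_le (by omega : W.length ≤ n)]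
      exact ih.trans (by exact_mod_cast Nat.le_succ n)

private lemma isPath_of_len_edist {G : SimpleGraph V} : ∀ {u v : V} (W : G.Walk u v),
    (W.length : ℕ∞) = G.edist u v → W.IsPath := by
  intro u v W
  classical
  induction W with
  | nil => intro _; exact IsPath.nil
  | @cons u w v h W ih =>
    intro hlen
    rw [length_cons] at hlen
    have h1 : G.edist w v ≤ (W.length : ℕ∞) := SimpleGraph.edist_le W
    have htop : G.edist w v ≠ ⊤ := by
      intro ht; rw [ht] at h1; simp at h1
    lift G.edist w v to ℕ using htop with e he
    have h2 : G.edist u v ≤ 1 + (e : ℕ∞) := by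
      have h2a := G.edist_triangle (u := u) (v := w) (w := v)
      rwa [edist_eq_one_iff_adj.mpr h, ← he] at h2a
    rw [← hlen] at h2
    have h2' : W.length + 1 ≤ 1 + e := by exact_mod_cast h2
    have h1' : e ≤ W.length := by exact_mod_cast h1
    have hW : W.IsPath := ih (by exact_mod_cast (by omega : W.length = e))
    refine hW.cons ?_
    intro hu
    have h4 : G.edist u v ≤ ((W.dropUntil u hu).length : ℕ∞) := SimpleGraph.edist_le _
    have h5 := W.length_dropUntil_le hu
    rw [← hlen] at h4
    have : W.length + 1 ≤ (W.dropUntil u hu).length := by exact_mod_cast h4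
    omega

private lemma radial_facts {G : SimpleGraph V} {r : ℕ}
    (key : ∀ z ∈ gcenter G, ∀ q ∈ cperiph G, G.edist z q = (r : ℕ∞))
    {c p : V} (hc : c ∈ gcenter G) (hp : p ∈ cperiph G)
    (W : G.Walk c p) (hlen : W.length = r) {i : ℕ} (hi : i ≤ r) :
    G.edist c (W.getVert i) = (i : ℕ∞) ∧ G.edist (W.getVert i) p = ((r - i : ℕ) : ℕ∞) ∧
      distToCenter G (W.getVert i) = (i : ℕ∞) := by
  have ha : G.edist c (W.getVert i) ≤ (i : ℕ∞) := edist_getVert_le W i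
  have hb : G.edist (W.getVert i) p ≤ ((r - i : ℕ) : ℕ∞) := by
    rw [SimpleGraph.edist_comm]
    have h := edist_getVert_le W.reverse (r - i)
    rwa [getVert_reverse, hlen, Nat.sub_sub_self hi] at h
  have hatop : G.edist c (W.getVert i) ≠ ⊤ := fun ht => by rw [ht] at ha; simp at ha
  have hbtop : G.edist (W.getVert i) p ≠ ⊤ := fun ht => by rw [ht] at hb; simp at hb
  have htri : (r : ℕ∞) ≤ G.edist c (W.getVert i) + G.edist (W.getVert i) p := by
    rw [← key c hc p hp]; exact G.edist_triangle
  lift G.edist c (W.getVert i) to ℕ using hatop with a haa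
  lift G.edist (W.getVert i) p to ℕ using hbtop with b hbb
  have ha' : a ≤ i := by exact_mod_cast ha
  have hb' : b ≤ r - i := by exact_mod_cast hb
  have htri' : r ≤ a + b := by exact_mod_cast htri
  have hae : a = i := by omega
  have hbe : b = r - i := by omega
  refine ⟨by exact_mod_cast hae, by exact_mod_cast hbe, ?_⟩
  apply le_antisymm
  · have h1 : distToCenter G (W.getVert i) ≤ G.edist (W.getVert i) c := iInf₂_le c hc
    rw [SimpleGraph.edist_comm, ← haa] at h1
    exact h1.trans (by exact_mod_cast hae.le)
  · refine le_iInf₂ fun z hz => ?_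
    rw [SimpleGraph.edist_comm]
    by_cases ht : G.edist z (W.getVert i) = ⊤
    · rw [ht]; exact le_top
    lift G.edist z (W.getVert i) to ℕ using ht with d hd
    have h2 : (r : ℕ∞) ≤ (d : ℕ∞) + (b : ℕ∞) := by
      rw [← key z hz p hp, hd, hbb]
      exact G.edist_triangle
    have h2' : r ≤ d + b := by exact_mod_cast h2
    exact_mod_cast (by omega : i ≤ d)

end Aux


/-- If `|D''₁| = |D''_{r−1}|` then each `Pᵢ` has a unique vertex `yᵢ ∈ D''_{r−1}` adjacent to
all of `Pᵢ`, and these vertices are pairwise distinct. -/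
theorem stmt5 [Fintype V] (G : SimpleGraph V) (hconn : G.Connected) (hUCG : IsUCG G)
    {r : ℕ} (hr : grad G = (r : ℕ∞))
    {k'' : ℕ} (x : Fin k'' → V) (hinj : Function.Injective x)
    (hxD : ∀ i, x i ∈ Dlevel G 1)
    (hcov : (⋃ i, Pset G r (x i)) = cperiph G)
    (ptil : Fin k'' → V)
    (hown : ∀ i, ptil i ∈ Pset G r (x i) ∧ ∀ j, j ≠ i → ptil i ∉ Pset G r (x j))
    (hcard : (Dlevel G 1 ∩ ⋃ i, radialSupport G r (x i)).ncard =
      (Dlevel G (r - 1) ∩ ⋃ i, radialSupport G r (x i)).ncard) :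
    ∃ y : Fin k'' → V, Function.Injective y ∧ ∀ i,
      y i ∈ Dlevel G (r - 1) ∩ (⋃ j, radialSupport G r (x j)) ∧
      (∀ p ∈ Pset G r (x i), G.Adj (y i) p) ∧
      ∀ y', y' ∈ Dlevel G (r - 1) ∩ (⋃ j, radialSupport G r (x j)) →
        (∀ p ∈ Pset G r (x i), G.Adj y' p) → y' = y i := by
  classical
  rcases Nat.eq_zero_or_pos k'' with hk0 | hkpos
  · subst hk0
    exact ⟨Fin.elim0, fun a => a.elim0, fun i => i.elim0⟩
  have i₀ : Fin k'' := ⟨0, hkpos⟩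
  -- distance from any center to any peripheral vertex is r
  have key : ∀ z ∈ gcenter G, ∀ q ∈ cperiph G, G.edist z q = (r : ℕ∞) := by
    intro z hz q hq
    have h1 : q ∈ eccSet G z := by rw [hUCG z hz]; exact hq
    have h2 : G.edist z q = gecc G z := h1
    rw [h2, (hz : gecc G z = grad G), hr]
  -- choose radial paths for the privately owned vertices
  have hptil : ∀ i, ptil i ∈ cperiph G ∧ ∃ c ∈ gcenter G, ∃ W : G.Walk c (ptil i),
      W.IsPath ∧ W.length = r ∧ x i ∈ W.support := fun i => (hown i).1
  choose hper c hc W hWp hWl hxW using hptil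
  -- r ≥ 1
  have hr1 : 1 ≤ r := by
    by_contra hcon
    have hr0 : r = 0 := by omega
    obtain ⟨m, hm, hm0⟩ := Walk.mem_support_iff_exists_getVert.mp (hxW i₀)
    have hm1 : m = 0 := by have := hWl i₀; omega
    have hxc : x i₀ = c i₀ := by rw [← hm, hm1, Walk.getVert_zero]
    have hle : distToCenter G (x i₀) ≤ 0 := by
      have h1 : distToCenter G (x i₀) ≤ G.edist (x i₀) (c i₀) := iInf₂_le (c i₀) (hc i₀)
      have h2 : G.edist (x i₀) (c i₀) = 0 := by rw [hxc]; exact SimpleGraph.edist_self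
      exact h1.trans h2.le
    have h2 : distToCenter G (x i₀) = (1 : ℕ∞) := hxD i₀
    rw [h2] at hle
    simp at hle
  -- each vertex of a radial path is determined by its level
  have hlevel : ∀ {c' p' : V}, c' ∈ gcenter G → p' ∈ cperiph G → ∀ (W' : G.Walk c' p'),
      W'.length = r → ∀ u ∈ W'.support, ∀ m : ℕ, m ≤ r →
      distToCenter G u = (m : ℕ∞) → u = W'.getVert m := by
    intro c' p' hc' hp' W' hlen u hu m hm hlev
    obtain ⟨n, hn, hnle⟩ := Walk.mem_support_iff_exists_getVert.mp hu
    have hf := (radial_facts key hc' hp' W' hlen (i := n) (by omega)).2.2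
    rw [hn, hlev] at hf
    have : m = n := by exact_mod_cast hf
    rw [← hn, this]
  -- D''₁ = range x
  have hD1 : Dlevel G 1 ∩ (⋃ i, radialSupport G r (x i)) = Set.range x := by
    apply Set.Subset.antisymm
    · rintro u ⟨hu1, hus⟩
      obtain ⟨i, hui⟩ := Set.mem_iUnion.mp hus
      obtain ⟨c', hc', p', hp', W', hWp', hWl', hxs', hus'⟩ := hui
      have h1 := hlevel hc' hp' W' hWl' u hus' 1 hr1 hu1
      have h2 := hlevel hc' hp' W' hWl' (x i) hxs' 1 hr1 (hxD i)
      exact ⟨i, by rw [h2, ← h1]⟩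
    · rintro _ ⟨i, rfl⟩
      exact ⟨hxD i, Set.mem_iUnion.mpr ⟨i,
        ⟨c i, hc i, ptil i, hper i, W i, hWp i, hWl i, hxW i, hxW i⟩⟩⟩
  have hcardx : (Set.range x).ncard = k'' := by
    rw [← Nat.card_coe_set_eq, Nat.card_range_of_injective hinj,
      Nat.card_eq_fintype_card, Fintype.card_fin]
  -- the candidate vertices
  set y0 : Fin k'' → V := fun i => (W i).getVert (r - 1) with hy0def
  have hy0fact := fun i =>
    radial_facts key (hc i) (hper i) (W i) (hWl i) (i := r - 1) (Nat.sub_le r 1)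
  have hy0lev : ∀ i, distToCenter G (y0 i) = ((r - 1 : ℕ) : ℕ∞) := fun i => (hy0fact i).2.2
  have hy0adj : ∀ i, G.Adj (y0 i) (ptil i) := by
    intro i
    have h := (W i).adj_getVert_succ (i := r - 1) (by rw [hWl i]; omega)
    rw [show r - 1 + 1 = r from by omega] at h
    rwa [(W i).getVert_of_length_le (le_of_eq (hWl i))] at h
  have hy0mem : ∀ i, y0 i ∈ radialSupport G r (x i) := fun i =>
    ⟨c i, hc i, ptil i, hper i, W i, hWp i, hWl i, hxW i,
      Walk.mem_support_iff_exists_getVert.mpr ⟨r - 1, rfl, by rw [hWl i]; omega⟩⟩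
  -- the splice lemma
  have splice : 2 ≤ r → ∀ z q w : V, distToCenter G z = ((r - 1 : ℕ) : ℕ∞) →
      q ∈ cperiph G → G.Adj z q → distToCenter G w = (1 : ℕ∞) →
      z ∈ radialSupport G r w → q ∈ Pset G r w := by
    intro hr2 z q w hz hq hadj hw hzw
    obtain ⟨c', hc', p', hp', W', hWp', hWl', hws', hzs'⟩ := hzw
    have hzeq : z = W'.getVert (r - 1) := hlevel hc' hp' W' hWl' z hzs' (r - 1) (Nat.sub_le r 1) hz
    have hweq : w = W'.getVert 1 := hlevel hc' hp' W' hWl' w hws' 1 hr1 hw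
    have hzfact := radial_facts key hc' hp' W' hWl' (i := r - 1) (Nat.sub_le r 1)
    have hwfact := radial_facts key hc' hp' W' hWl' (i := 1) hr1
    set T := W'.takeUntil z hzs' with hT
    set Dr := W'.dropUntil z hzs' with hDdef
    have hsplit := W'.take_spec hzs'
    have hlen_sum : T.length + Dr.length = r := by
      rw [← hWl', ← hsplit, Walk.length_append]
    have hz1 : G.edist c' z = ((r - 1 : ℕ) : ℕ∞) := by rw [hzeq]; exact hzfact.1
    have hz2 : G.edist z p' = ((r - (r - 1) : ℕ) : ℕ∞) := by rw [hzeq]; exact hzfact.2.1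
    have hTlen_ge : r - 1 ≤ T.length := by
      have h := SimpleGraph.edist_le T
      rw [hz1] at h
      exact_mod_cast h
    have hDlen_ge : r - (r - 1) ≤ Dr.length := by
      have h := SimpleGraph.edist_le Dr
      rw [hz2] at h
      exact_mod_cast h
    have hTlen : T.length = r - 1 := by omega
    have hwT : w ∈ T.support := by
      by_cases hwz : w = z
      · rw [hwz]; exact T.end_mem_support
      · have hsplit2 : w ∈ T.support ∨ w ∈ Dr.support := by
          have h := hws'
          rw [← hsplit, Walk.mem_support_append_iff] at h
          exact h
        rcases hsplit2 with h | h
        · exact h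
        · exfalso
          have h1 : G.edist w p' ≤ ((Dr.dropUntil w h).length : ℕ∞) := SimpleGraph.edist_le _
          have h2 := Dr.length_dropUntil_le h
          have hw2 : G.edist w p' = ((r - 1 : ℕ) : ℕ∞) := by rw [hweq]; exact hwfact.2.1
          rw [hw2] at h1
          have h3 : r - 1 ≤ (Dr.dropUntil w h).length := by exact_mod_cast h1
          have hre : r = 2 := by omega
          apply hwz
          rw [hweq, hzeq, hre]
    have hcq : G.edist c' q = (r : ℕ∞) := key c' hc' q hq
    have hW2len : (T.concat hadj).length = r := by rw [Walk.length_concat, hTlen]; omega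
    have hW2path : (T.concat hadj).IsPath :=
      isPath_of_len_edist _ (by rw [hW2len, hcq])
    refine ⟨hq, c', hc', T.concat hadj, hW2path, hW2len, ?_⟩
    rw [Walk.support_concat]
    simp only [List.concat_eq_append, List.mem_append]
    exact Or.inl hwT
  -- distinct indices force r ≥ 2
  have two_le : ∀ i j : Fin k'', i ≠ j → 2 ≤ r := by
    intro i j hij
    by_contra hcon
    have hreq : r = 1 := by omega
    have hsub : ∀ a b : V, a ∈ gcenter G → b ∈ gcenter G → a = b := by
      intro a b ha hb
      by_contra hne
      have h1 : G.edist b a ≤ gecc G b := le_iSup (fun u => G.edist b u) a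
      have hgb : gecc G b = (r : ℕ∞) := (hb : gecc G b = grad G).trans hr
      have h2 : G.edist b a = (r : ℕ∞) := by
        refine le_antisymm (h1.trans_eq hgb) ?_
        rw [hreq]
        exact Order.one_le_iff_pos.mpr (G.edist_pos_of_ne (Ne.symm hne))
      have ha_in : a ∈ eccSet G b := h2.trans hgb.symm
      have ha_per : a ∈ cperiph G := by rw [← hUCG b hb]; exact ha_in
      have ha_ecc : a ∈ eccSet G a := by rw [hUCG a ha]; exact ha_per
      have h3 : G.edist a a = gecc G a := ha_ecc
      rw [SimpleGraph.edist_self, (ha : gecc G a = grad G), hr, hreq] at h3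
      simp at h3
    have hD0 : Dlevel G (r - 1) ∩ (⋃ i, radialSupport G r (x i)) ⊆ {c i₀} := by
      intro u hu
      have hu0 : distToCenter G u = 0 := by
        have h : distToCenter G u = ((r - 1 : ℕ) : ℕ∞) := hu.1
        rw [show ((r - 1 : ℕ) : ℕ∞) = 0 from by rw [hreq]; simp] at h
        exact h
      have hz0 : ∃ z ∈ gcenter G, G.edist u z = 0 := by
        by_contra hcon2
        push_neg at hcon2
        have h1 : (1 : ℕ∞) ≤ distToCenter G u :=
          le_iInf₂ fun z hz => Order.one_le_iff_pos.mpr (pos_iff_ne_zero.mpr (hcon2 z hz))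
        rw [hu0] at h1
        simp at h1
      obtain ⟨z, hz, hz0'⟩ := hz0
      have huz : u = z := SimpleGraph.edist_eq_zero_iff.mp hz0'
      exact huz.trans (hsub z (c i₀) hz (hc i₀))
    have hcard_le : (Dlevel G (r - 1) ∩ ⋃ i, radialSupport G r (x i)).ncard ≤ 1 := by
      calc (Dlevel G (r - 1) ∩ ⋃ i, radialSupport G r (x i)).ncard
          ≤ ({c i₀} : Set V).ncard := Set.ncard_le_ncard hD0 (Set.finite_singleton _)
        _ = 1 := Set.ncard_singleton _
    have hk1 : k'' ≤ 1 := by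
      rw [← hcardx, ← hD1, hcard]
      exact hcard_le
    have hi := i.isLt
    have hj := j.isLt
    exact hij (Fin.ext (by omega))
  -- private y's are not on other radial supports
  have hnot : ∀ i j : Fin k'', j ≠ i → y0 j ∉ radialSupport G r (x i) := by
    intro i j hji hmem
    have h := splice (two_le j i hji) (y0 j) (ptil j) (x i) (hy0lev j) (hper j) (hy0adj j)
      (hxD i) hmem
    exact (hown j).2 i (Ne.symm hji) h
  have hy0inj : Function.Injective y0 := by
    intro i j hij
    by_contra hne
    exact hnot i j (Ne.symm hne) (hij ▸ hy0mem i)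
  have hy0Dr : ∀ i, y0 i ∈ Dlevel G (r - 1) ∩ ⋃ i, radialSupport G r (x i) := fun i =>
    ⟨hy0lev i, Set.mem_iUnion.mpr ⟨i, hy0mem i⟩⟩
  have hrange : Set.range y0 = Dlevel G (r - 1) ∩ ⋃ i, radialSupport G r (x i) := by
    apply Set.eq_of_subset_of_ncard_le
    · rintro _ ⟨i, rfl⟩; exact hy0Dr i
    · have h1 : (Set.range y0).ncard = k'' := by
        rw [← Nat.card_coe_set_eq, Nat.card_range_of_injective hy0inj,
          Nat.card_eq_fintype_card, Fintype.card_fin]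
      rw [h1, ← hcard, hD1, hcardx]
    · exact Set.toFinite _
  -- any level-(r-1) vertex on a radial path through x i is y0 i
  have hS : ∀ (i : Fin k'') (z : V), distToCenter G z = ((r - 1 : ℕ) : ℕ∞) →
      z ∈ radialSupport G r (x i) → z = y0 i := by
    intro i z hzlev hzmem
    have hzDr : z ∈ Set.range y0 := by
      rw [hrange]
      exact ⟨hzlev, Set.mem_iUnion.mpr ⟨i, hzmem⟩⟩
    obtain ⟨j, rfl⟩ := hzDr
    by_cases hji : j = i
    · rw [hji]
    · exact absurd hzmem (hnot i j hji)
  refine ⟨y0, hy0inj, fun i => ⟨hy0Dr i, ?_, ?_⟩⟩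
  · intro p hp
    obtain ⟨hpper, c', hc', W', hWp', hWl', hxs'⟩ := hp
    have hzfact := radial_facts key hc' hpper W' hWl' (i := r - 1) (Nat.sub_le r 1)
    have hzmem : W'.getVert (r - 1) ∈ radialSupport G r (x i) :=
      ⟨c', hc', p, hpper, W', hWp', hWl', hxs',
        Walk.mem_support_iff_exists_getVert.mpr ⟨r - 1, rfl, by rw [hWl']; omega⟩⟩
    have hzeq : W'.getVert (r - 1) = y0 i := hS i _ hzfact.2.2 hzmem
    have hadj := W'.adj_getVert_succ (i := r - 1) (by rw [hWl']; omega)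
    rw [show r - 1 + 1 = r from by omega] at hadj
    rw [W'.getVert_of_length_le (le_of_eq hWl'), hzeq] at hadj
    exact hadj
  · intro y' hy' hadjall
    have hy'r : y' ∈ Set.range y0 := by rw [hrange]; exact hy'
    obtain ⟨j, rfl⟩ := hy'r
    by_cases hji : j = i
    · rw [hji]
    · exfalso
      have hadjp : G.Adj (y0 j) (ptil i) := hadjall (ptil i) (hown i).1
      have h := splice (two_le j i hji) (y0 j) (ptil i) (x j) (hy0lev j) (hper i) hadjp
        (hxD j) (hy0mem j)
      exact (hown i).2 j hji h
end

section
/- Let H be a UCG with C = ⟨Z(H)⟩ and P = ⟨CP(H)⟩, and suppose the induced covering {P_1,...,P_k} of P via D_1 = {x_1,...,x_k} already has the property that each P_i contains a vertex p̃_i belonging to no other P_j (i.e. D_1 = D''_1). Then every central vertex of H is adjacent to every vertex of D_1. -/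
open SimpleGraph

variable {V : Type*} {ι : Type*}

/-- If every element of the induced covering owns a vertex belonging to no other element,
then every central vertex is adjacent to every vertex at distance 1 from the center. -/
theorem stmt6 (G : SimpleGraph V) (hconn : G.Connected) (hUCG : IsUCG G)
    {r : ℕ} (hr : grad G = (r : ℕ∞))
    (hown : ∀ x ∈ Dlevel G 1, ∃ p, p ∈ Pset G r x ∧
      ∀ x' ∈ Dlevel G 1, x' ≠ x → p ∉ Pset G r x') :
    ∀ c ∈ gcenter G, ∀ x ∈ Dlevel G 1, G.Adj c x := by
  intro c hc x hx
  obtain ⟨p, hpx, huniq⟩ := hown x hx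
  have hpcp : p ∈ cperiph G := hpx.1
  have hcr : gecc G c = (r : ℕ∞) := by
    have : gecc G c = grad G := hc
    rw [this, hr]
  have hpe : G.edist c p = (r : ℕ∞) := by
    have hmem : p ∈ eccSet G c := by rw [hUCG c hc]; exact hpcp
    have hmem' : G.edist c p = gecc G c := hmem
    rw [hmem', hcr]
  have hx1 : distToCenter G x = (1 : ℕ∞) := by
    have := hx
    simpa [Dlevel] using this
  have h1r : (1 : ℕ∞) ≤ (r : ℕ∞) := by
    calc (1 : ℕ∞) = distToCenter G x := hx1.symm
      _ ≤ G.edist x c := iInf₂_le c hc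
      _ = G.edist c x := edist_comm
      _ ≤ gecc G c := le_iSup (fun u => G.edist c u) x
      _ = (r : ℕ∞) := hcr
  have hr1 : 1 ≤ r := by exact_mod_cast h1r
  have hd : G.dist c p = r := by
    simp [SimpleGraph.dist, hpe]
  obtain ⟨W, hWp, hWl⟩ := hconn.exists_path_of_dist c p
  rw [hd] at hWl
  cases W with
  | nil => simp at hWl; omega
  | @cons _ x' _ hadj W' =>
    rw [Walk.length_cons] at hWl
    have hx'nc : x' ∉ gcenter G := by
      intro hx'c
      have h1 : G.edist x' p = (r : ℕ∞) := by
        have hmem : p ∈ eccSet G x' := by rw [hUCG x' hx'c]; exact hpcp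
        have hmem' : G.edist x' p = gecc G x' := hmem
        have : gecc G x' = grad G := hx'c
        rw [hmem', this, hr]
      have h2 : G.edist x' p ≤ (W'.length : ℕ∞) := edist_le W'
      rw [h1] at h2
      have : r ≤ W'.length := by exact_mod_cast h2
      omega
    have hx'D : x' ∈ Dlevel G 1 := by
      have hle : distToCenter G x' ≤ (1 : ℕ∞) := by
        calc distToCenter G x' ≤ G.edist x' c := iInf₂_le c hc
          _ = 1 := edist_eq_one_iff_adj.mpr hadj.symm
      have hge : (1 : ℕ∞) ≤ distToCenter G x' := by
        apply le_iInf₂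
        intro z hz
        have hne : x' ≠ z := by rintro rfl; exact hx'nc hz
        exact Order.one_le_iff_pos.mpr (edist_pos_of_ne hne)
      have : distToCenter G x' = (1 : ℕ∞) := le_antisymm hle hge
      simpa [Dlevel] using this
    have hpx' : p ∈ Pset G r x' := by
      refine ⟨hpcp, c, hc, Walk.cons hadj W', hWp, ?_, ?_⟩
      · rw [Walk.length_cons]; exact hWl
      · simp [Walk.support_cons]
    have hxx : x' = x := by
      by_contra hne
      exact huniq x' hx'D hne hpx'
    subst hxx
    exact hadj
end

section
/- If H is a uniform central graph with radius r, centered periphery inducing P, and κ is the minimum size of a covering of P satisfying condition A, then the number of intermediate vertices of H satisfies |I(H)| ≥ κ(r − 1), where I(H) = V(H) − (Z(H) ∪ CP(H)). -/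
/-
Fix a level `1 ≤ m ≤ r - 1` and put `s = r - m`. The level `D_m` of vertices at distance `m`
from the center consists of intermediate vertices, and the balls of radius `s` around its
vertices, intersected with the centered periphery `P`, form a covering of `P` satisfying
condition A. They cover `P` because in a uniform central graph every vertex of `P` is at
distance `r` from every central vertex, so the vertex at distance `m` from the center on a
geodesic from a central vertex to it lies in `D_m`. Condition A holds because for `x ∈ D_m`,
the neighbour `v` of a nearest central vertex on a geodesic towards `x` is not central, hence has
an eccentric vertex `w` at distance `≥ r + 1`; `w` lies in `P` and is at distance `≥ s + 2` from
`x`, hence at distance `≥ 2` from the whole ball. Thus `κ ≤ |D_m|` for each of the `r - 1`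
disjoint levels.
-/

open SimpleGraph

variable {V : Type*} {ι : Type*}

namespace SimpleGraph

variable {W : Type*} {G : SimpleGraph V} {c p u v w x : V}

lemma edist_map_le {G' : SimpleGraph W} (f : G →g G') (u v : V) :
    G'.edist (f u) (f v) ≤ G.edist u v := by
  rcases eq_or_ne (G.edist u v) ⊤ with h | h
  · simp [h]
  · obtain ⟨q, hq⟩ := (reachable_of_edist_ne_top h).exists_walk_length_eq_edist
    rw [← hq, ← Walk.length_map f]
    exact edist_le _

lemma edist_le_edist_induce (S : Set V) (u v : S) : G.edist u v ≤ (G.induce S).edist u v :=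
  edist_map_le (Embedding.induce S).toHom u v

lemma le_edist_of_add_le_edist {a b : ℕ} (hxw : (a + b : ℕ∞) ≤ G.edist x w)
    (hxv : G.edist x v ≤ a) : (b : ℕ∞) ≤ G.edist v w := by
  refine (ENat.add_le_add_iff_left (ENat.natCast_ne_top a)).1 ?_
  calc (a + b : ℕ∞) ≤ G.edist x w := hxw
    _ ≤ G.edist x v + G.edist v w := G.edist_triangle
    _ ≤ a + G.edist v w := by gcongr

lemma exists_edist_eq_of_edist_eq_add {a b : ℕ} (h : G.edist u v = a + b) :
    ∃ x, G.edist u x = a ∧ G.edist x v = b := by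
  obtain ⟨q, hq⟩ := exists_walk_of_edist_eq_coe (k := a + b) (by exact_mod_cast h)
  refine ⟨q.getVert a, ?_⟩
  have hux : G.edist u (q.getVert a) ≤ a :=
    (edist_le (q.take a)).trans (by simp [Walk.take_length, hq])
  have hxv : G.edist (q.getVert a) v ≤ b :=
    (edist_le (q.drop a)).trans (by simp [Walk.drop_length, hq])
  have htri : (a + b : ℕ∞) ≤ G.edist u (q.getVert a) + G.edist (q.getVert a) v :=
    h ▸ G.edist_triangle
  lift G.edist u (q.getVert a) to ℕ using
    ne_top_of_le_ne_top (ENat.natCast_ne_top a) hux with d₁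
  lift G.edist (q.getVert a) v to ℕ using
    ne_top_of_le_ne_top (ENat.natCast_ne_top b) hxv with d₂
  norm_cast at *
  omega

lemma exists_edist_eq_gecc [Finite V] [Nonempty V] (v : V) : ∃ u, G.edist v u = gecc G v := by
  obtain ⟨u, hu⟩ := Finite.exists_max (G.edist v)
  exact ⟨u, le_antisymm (le_iSup _ u) (iSup_le hu)⟩

lemma gcenter_nonempty [Finite V] [Nonempty V] : (gcenter G).Nonempty := by
  obtain ⟨c, hc⟩ := Finite.exists_min (gecc G)
  exact ⟨c, le_antisymm (le_iInf hc) (iInf_le _ c)⟩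

lemma edist_le_grad_of_mem_gcenter (hc : c ∈ gcenter G) (u : V) : G.edist c u ≤ grad G :=
  hc ▸ le_iSup (G.edist c) u

lemma grad_lt_gecc_of_notMem_gcenter (hv : v ∉ gcenter G) : grad G < gecc G v :=
  (iInf_le _ v).lt_of_ne fun h => hv h.symm

lemma mem_cperiph_of_edist_eq_grad (hc : c ∈ gcenter G) (h : G.edist c w = grad G) :
    w ∈ cperiph G :=
  Set.mem_biUnion hc (h.trans hc.symm)

lemma edist_eq_grad_of_mem_cperiph (hUCG : IsUCG G) (hc : c ∈ gcenter G) (hp : p ∈ cperiph G) :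
    G.edist c p = grad G := by
  rw [← hUCG c hc] at hp
  exact hp.trans hc

lemma distToCenter_le_edist (hc : c ∈ gcenter G) (u : V) : distToCenter G u ≤ G.edist u c :=
  iInf₂_le c hc

lemma exists_mem_gcenter_edist_eq_distToCenter [Finite V] [Nonempty V] (u : V) :
    ∃ c ∈ gcenter G, G.edist u c = distToCenter G u := by
  obtain ⟨c, hc, hmin⟩ :=
    Set.exists_min_image (gcenter G) (G.edist u) (Set.toFinite _) gcenter_nonempty
  exact ⟨c, hc, le_antisymm (le_iInf₂ hmin) (distToCenter_le_edist hc u)⟩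

lemma grad_le_distToCenter_of_mem_cperiph (hUCG : IsUCG G) (hp : p ∈ cperiph G) :
    grad G ≤ distToCenter G p :=
  le_iInf₂ fun _ hc => (edist_eq_grad_of_mem_cperiph hUCG hc hp).ge.trans_eq G.edist_comm

lemma Dlevel_subset_diff (hUCG : IsUCG G) {r m : ℕ} (hr : grad G = r) (hm : 0 < m) (hmr : m < r) :
    Dlevel G m ⊆ Set.univ \ (gcenter G ∪ cperiph G) := by
  rintro x (hx : distToCenter G x = m)
  refine ⟨trivial, ?_⟩
  rintro (hc | hp)
  · have := distToCenter_le_edist hc x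
    rw [edist_self, hx] at this
    exact hm.ne' (by exact_mod_cast nonpos_iff_eq_zero.1 this)
  · have := grad_le_distToCenter_of_mem_cperiph hUCG hp
    rw [hr, hx] at this
    exact hmr.not_ge (by exact_mod_cast this)

lemma pairwiseDisjoint_Dlevel (t : Set ℕ) : t.PairwiseDisjoint (Dlevel G) :=
  fun _ _ _ _ hmn => Set.disjoint_left.2 fun _ hm hn => hmn (by exact_mod_cast hm.symm.trans hn)

lemma exists_mem_cperiph_add_one_le_edist [Finite V] {r : ℕ} (hr : grad G = r)
    (hc : c ∈ gcenter G) (hcv : G.edist c v ≤ 1) (hv : v ∉ gcenter G) :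
    ∃ w ∈ cperiph G, (r + 1 : ℕ∞) ≤ G.edist v w := by
  have : Nonempty V := ⟨c⟩
  obtain ⟨w, hw⟩ := exists_edist_eq_gecc (G := G) v
  have hvw : (r + 1 : ℕ∞) ≤ G.edist v w :=
    hw ▸ Order.add_one_le_of_lt (hr ▸ grad_lt_gecc_of_notMem_gcenter hv)
  have hcw : grad G ≤ G.edist c w :=
    hr ▸ le_edist_of_add_le_edist (a := 1) (by rwa [add_comm]) (G.edist_comm.trans_le hcv)
  exact ⟨w, mem_cperiph_of_edist_eq_grad hc ((edist_le_grad_of_mem_gcenter hc w).antisymm hcw),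
    hvw⟩

lemma exists_mem_cperiph_add_two_le_edist [Finite V] {r m s : ℕ} (hr : grad G = r)
    (hm : 1 ≤ m) (hms : m + s = r) (hx : x ∈ Dlevel G m) :
    ∃ w ∈ cperiph G, (s + 2 : ℕ∞) ≤ G.edist x w := by
  have : Nonempty V := ⟨x⟩
  obtain ⟨c, hc, hxc⟩ := exists_mem_gcenter_edist_eq_distToCenter (G := G) x
  obtain ⟨v, hcv, hvx⟩ :=
    exists_edist_eq_of_edist_eq_add (a := 1) (b := m - 1) (u := c) (v := x)
      (by rw [edist_comm, hxc, hx]; norm_cast; omega)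
  have hv : v ∉ gcenter G := fun hv => by
    have := (distToCenter_le_edist hv x).trans_eq (G.edist_comm.trans hvx)
    rw [hx] at this
    exact absurd (show m ≤ m - 1 by exact_mod_cast this) (by omega)
  obtain ⟨w, hw, hvw⟩ := exists_mem_cperiph_add_one_le_edist hr hc hcv.le hv
  have hfar := le_edist_of_add_le_edist (a := m - 1) (b := s + 2)
    (hvw.trans' (by norm_cast; omega)) hvx.le
  exact ⟨w, hw, by exact_mod_cast hfar⟩

lemma exists_mem_Dlevel_edist_le (hUCG : IsUCG G) {r m s : ℕ} (hr : grad G = r) (hms : m + s = r)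
    (hp : p ∈ cperiph G) : ∃ x ∈ Dlevel G m, G.edist x p ≤ s := by
  obtain ⟨c, hc, -⟩ := Set.mem_iUnion₂.1 hp
  have hcp : G.edist c p = m + s := by
    rw [edist_eq_grad_of_mem_cperiph hUCG hc hp, hr, ← hms, Nat.cast_add]
  obtain ⟨x, hcx, hxp⟩ := exists_edist_eq_of_edist_eq_add hcp
  refine ⟨x, le_antisymm (G.edist_comm.trans hcx ▸ distToCenter_le_edist hc x) ?_, hxp.le⟩
  refine le_iInf₂ fun z hz =>
    le_edist_of_add_le_edist (x := p) (a := s) ?_ (G.edist_comm.trans_le hxp.le)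
  rw [edist_comm, edist_eq_grad_of_mem_cperiph hUCG hz hp, hr, ← hms, Nat.cast_add, add_comm]

lemma covA_le_natCard [Finite ι] (P : ι → Set V) (hP : ⋃ i, P i = Set.univ) (hA : CondA G P) :
    covA G ≤ Nat.card ι := by
  let e := Finite.equivFin ι
  refine Nat.sInf_le ⟨P ∘ e.symm, ?_, fun i => hA (e.symm i)⟩
  rw [← hP]
  exact e.symm.surjective.iUnion_comp P

lemma condA_induce_ball {S : Set V} (x : ι → V) (s : ℕ)
    (hfar : ∀ i, ∃ w ∈ S, (s + 2 : ℕ∞) ≤ G.edist (x i) w) :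
    CondA (G.induce S) fun i => {q : S | G.edist (x i) q ≤ s} := by
  intro i
  obtain ⟨w, hwS, hw⟩ := hfar i
  refine ⟨⟨w, hwS⟩, fun hw' => ?_, fun q hq => ?_⟩
  · exact absurd (hw.trans hw') (by norm_cast; omega)
  · exact (le_edist_of_add_le_edist hw hq).trans (edist_le_edist_induce S q ⟨w, hwS⟩)

lemma covA_induce_cperiph_le_ncard_Dlevel [Finite V] (hUCG : IsUCG G) {r m : ℕ}
    (hr : grad G = r) (hm : 1 ≤ m) (hmr : m ≤ r) :
    covA (G.induce (cperiph G)) ≤ (Dlevel G m).ncard := by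
  have hms : m + (r - m) = r := by omega
  have hcover : ⋃ x : Dlevel G m, {q : cperiph G | G.edist x q ≤ (r - m : ℕ)} = Set.univ :=
    Set.eq_univ_of_forall fun q => by
      obtain ⟨x, hx, hxq⟩ := exists_mem_Dlevel_edist_le hUCG hr hms q.2
      exact Set.mem_iUnion.2 ⟨⟨x, hx⟩, hxq⟩
  calc covA (G.induce (cperiph G)) ≤ Nat.card (Dlevel G m) :=
        covA_le_natCard _ hcover <| condA_induce_ball _ _ fun x =>
          exists_mem_cperiph_add_two_le_edist hr hm hms x.2
    _ = (Dlevel G m).ncard := Nat.card_coe_set_eq _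

end SimpleGraph

lemma Finset.sum_ncard_le_ncard_of_pairwiseDisjoint {α : Type*} [Finite α] {t : Finset ι}
    {s : ι → Set α} {u : Set α} (hd : (t : Set ι).PairwiseDisjoint s)
    (hsub : ∀ i ∈ t, s i ⊆ u) :
    ∑ i ∈ t, (s i).ncard ≤ u.ncard := by
  rw [← finsum_mem_coe_finset, ← t.finite_toSet.ncard_biUnion (fun _ _ => Set.toFinite _) hd]
  exact Set.ncard_le_ncard (Set.iUnion₂_subset hsub)

theorem stmt7_general [Fintype V] (G : SimpleGraph V) (hUCG : IsUCG G)
    {r : ℕ} (hr : grad G = (r : ℕ∞)) :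
    covA (G.induce (cperiph G)) * (r - 1) ≤
      (Set.univ \ (gcenter G ∪ cperiph G)).ncard := by
  calc covA (G.induce (cperiph G)) * (r - 1)
      = ∑ _m ∈ Finset.Icc 1 (r - 1), covA (G.induce (cperiph G)) := by simp [mul_comm]
    _ ≤ ∑ m ∈ Finset.Icc 1 (r - 1), (Dlevel G m).ncard :=
      Finset.sum_le_sum fun m hm =>
        covA_induce_cperiph_le_ncard_Dlevel hUCG hr (Finset.mem_Icc.1 hm).1
          (by have := Finset.mem_Icc.1 hm; omega)
    _ ≤ (Set.univ \ (gcenter G ∪ cperiph G)).ncard :=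
      Finset.sum_ncard_le_ncard_of_pairwiseDisjoint (pairwiseDisjoint_Dlevel _) fun m hm =>
        Dlevel_subset_diff hUCG hr (Finset.mem_Icc.1 hm).1 (by have := Finset.mem_Icc.1 hm; omega)

/-- The number of intermediate vertices of a UCG is at least `κ(r − 1)`, where `κ` is the
minimum size of a condition-A covering of the induced centered periphery. -/
theorem stmt7 [Fintype V] (G : SimpleGraph V) (hconn : G.Connected) (hUCG : IsUCG G)
    {r : ℕ} (hr : grad G = (r : ℕ∞)) :
    covA (G.induce (cperiph G)) * (r - 1) ≤
      (Set.univ \ (gcenter G ∪ cperiph G)).ncard :=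
  stmt7_general G hUCG hr
end

section
/- Let H be a uniform central graph with V(C) = Z(H) for some graph C, and let G be a spanning subgraph of H. If d_G(c, x) = d_H(c, x) for all c ∈ V(C) and all x ∈ V(G), then G is a uniform central graph with Z(G) = V(C) and CP(G) = CP(H). -/
open SimpleGraph

variable {V : Type*} {ι : Type*}

/-- A spanning subgraph of a UCG preserving distances from the center is again a UCG with
the same center and centered periphery. -/
theorem stmt10 (G H : SimpleGraph V) (hle : G ≤ H) (hUCG : IsUCG H)
    (hd : ∀ c ∈ gcenter H, ∀ x, G.edist c x = H.edist c x) :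
    IsUCG G ∧ gcenter G = gcenter H ∧ cperiph G = cperiph H := by
  cases isEmpty_or_nonempty V with
  | inl hV =>
    refine ⟨fun c hc => absurd (IsEmpty.false c) (not_false), ?_, ?_⟩
    · exact Subsingleton.elim _ _
    · exact Subsingleton.elim _ _
  | inr hV =>
    -- eccentricities of H are ≤ those of G
    have hle_ecc : ∀ v, gecc H v ≤ gecc G v := fun v =>
      iSup_mono fun u => SimpleGraph.edist_anti hle
    -- radius of H ≤ eccentricity of any vertex
    have hradH : ∀ v, grad H ≤ gecc H v := fun v => iInf_le _ v
    -- center of H is nonempty (ℕ∞ is well-ordered)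
    obtain ⟨c0, hc0mem, hc0min⟩ := (wellFounded_lt (α := ℕ∞)).has_min
      (Set.range (gecc H)) (Set.range_nonempty _)
    obtain ⟨v0, hv0⟩ := hc0mem
    have hc0 : v0 ∈ gcenter H := by
      refine le_antisymm ?_ (hradH v0)
      refine le_iInf fun u => ?_
      by_contra h
      exact hc0min _ ⟨u, rfl⟩ (hv0 ▸ not_le.mp h)
    -- eccentricity in G equals in H for center vertices of H
    have heccc : ∀ c ∈ gcenter H, gecc G c = gecc H c := fun c hc =>
      iSup_congr fun u => hd c hc u
    -- radii are equal
    have hrad : grad G = grad H := by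
      refine le_antisymm ?_ (le_iInf fun v => (hradH v).trans (hle_ecc v))
      calc grad G ≤ gecc G v0 := iInf_le _ v0
        _ = gecc H v0 := heccc v0 hc0
        _ = grad H := hc0
    -- centers are equal
    have hcent : gcenter G = gcenter H := by
      ext v
      constructor
      · intro hv
        have h1 : gecc H v ≤ grad H := by
          calc gecc H v ≤ gecc G v := hle_ecc v
            _ = grad G := hv
            _ = grad H := hrad
        exact le_antisymm h1 (hradH v)
      · intro hv
        show gecc G v = grad G
        rw [heccc v hv, hv, hrad]
    -- eccSet equal on center vertices
    have heccSet : ∀ c ∈ gcenter H, eccSet G c = eccSet H c := by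
      intro c hc
      ext u
      simp only [eccSet, Set.mem_setOf_eq, hd c hc u, heccc c hc]
    have hcp : cperiph G = cperiph H := by
      unfold cperiph
      rw [hcent]
      exact Set.iUnion₂_congr heccSet
    refine ⟨?_, hcent, hcp⟩
    intro c hc
    rw [hcent] at hc
    rw [heccSet c hc, hcp]
    exact hUCG c hc
end

section
/- If P is a graph with diam(P) ≥ 3, then the minimum size of a covering of P satisfying condition A equals 2. Explicitly, if e(x) ≥ 3 for some vertex x, then {N[x], V(P) − N[x]} is such a covering. -/
open SimpleGraph

variable {V : Type*} {ι : Type*}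

/- For a vertex `x` of eccentricity at least 3, pick `p` with `d(x, p) ≥ 3`. Then `p` lies
outside `N[x]` and the triangle inequality through `x` keeps it at distance at least 2 from
every vertex of `N[x]`, while `x` itself lies outside `V − N[x]` at distance at least 2 from every
vertex of it. Conversely, each class of a condition-A covering misses a vertex, which then lies
in another class, so such a covering has at least two classes. -/

lemma mem_insert_neighborSet_iff_edist_le_one (G : SimpleGraph V) {x q : V} :
    q ∈ insert x (G.neighborSet x) ↔ G.edist x q ≤ 1 := by
  rw [edist_le_one_iff_adj_or_eq, Set.mem_insert_iff, mem_neighborSet, eq_comm, or_comm]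

lemma Set.iUnion_vecCons_compl {α : Type*} (A : Set α) :
    ⋃ i, (![A, Aᶜ] : Fin 2 → Set α) i = Set.univ := by
  simp [Set.iUnion_eq_univ_iff, Fin.exists_fin_two, em]

lemma exists_three_le_edist_of_three_le_gecc {G : SimpleGraph V} {x : V}
    (hx : 3 ≤ gecc G x) : ∃ p, 3 ≤ G.edist x p := by
  obtain ⟨p, hp⟩ := lt_iSup_iff.1 (lt_of_lt_of_le (by norm_num : (2 : ℕ∞) < 3) hx)
  exact ⟨p, Order.add_one_le_of_lt hp⟩

lemma condA_closedNbhd_compl (G : SimpleGraph V) {x : V} (hx : 3 ≤ gecc G x) :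
    CondA G ![insert x (G.neighborSet x), (insert x (G.neighborSet x))ᶜ] := by
  obtain ⟨p, hp⟩ := exists_three_le_edist_of_three_le_gecc hx
  intro i
  fin_cases i
  · refine ⟨p, fun hpN => ?_, fun q hq => ?_⟩
    · exact absurd (hp.trans ((mem_insert_neighborSet_iff_edist_le_one G).1 hpN)) (by norm_num)
    · by_contra! hqp
      have hxp : G.edist x p ≤ 2 := calc
        G.edist x p ≤ G.edist x q + G.edist q p := G.edist_triangle
        _ ≤ 1 + 1 := add_le_add ((mem_insert_neighborSet_iff_edist_le_one G).1 hq)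
          (Order.le_of_lt_add_one hqp)
        _ = 2 := one_add_one_eq_two
      exact absurd (hp.trans hxp) (by norm_num)
  · refine ⟨x, by simp, fun q hq => ?_⟩
    rw [edist_comm]
    exact Order.add_one_le_of_lt (not_le.1 ((mem_insert_neighborSet_iff_edist_le_one G).not.1 hq))

lemma nontrivial_of_condA {ι : Type*} [Nonempty V] {G : SimpleGraph V} {P : ι → Set V}
    (hP : ⋃ i, P i = Set.univ) (hA : CondA G P) : Nontrivial ι := by
  obtain ⟨i, -⟩ := Set.mem_iUnion.1 (hP ▸ Set.mem_univ (Classical.arbitrary V))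
  obtain ⟨p, hpi, -⟩ := hA i
  obtain ⟨j, hpj⟩ := Set.mem_iUnion.1 (hP ▸ Set.mem_univ p)
  exact ⟨i, j, fun h => hpi (h ▸ hpj)⟩

lemma covA_eq_two [Nonempty V] {G : SimpleGraph V}
    (h : ∃ P : Fin 2 → Set V, ⋃ i, P i = Set.univ ∧ CondA G P) : covA G = 2 :=
  le_antisymm (Nat.sInf_le h) <| le_csInf ⟨2, h⟩ fun _ ⟨_, hP, hA⟩ =>
    Fin.nontrivial_iff_two_le.1 (nontrivial_of_condA hP hA)

/-- If `diam(P) ≥ 3` then `cov_A(P) = 2`; explicitly, if `e(x) ≥ 3` then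
`{N[x], V(P) − N[x]}` is a covering satisfying condition A. -/
theorem stmt14 (G : SimpleGraph V) :
    (3 ≤ gdiam G → covA G = 2) ∧
    ∀ x : V, 3 ≤ gecc G x →
      (⋃ i, (![insert x (G.neighborSet x), (insert x (G.neighborSet x))ᶜ] : Fin 2 → Set V) i)
        = Set.univ ∧
      CondA G ![insert x (G.neighborSet x), (insert x (G.neighborSet x))ᶜ] := by
  refine ⟨fun hdiam => ?_, fun x hx => ⟨Set.iUnion_vecCons_compl _, condA_closedNbhd_compl G hx⟩⟩
  obtain ⟨x, hx⟩ := lt_iSup_iff.1 (lt_of_lt_of_le (by norm_num : (2 : ℕ∞) < 3) hdiam)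
  have : Nonempty V := ⟨x⟩
  exact covA_eq_two
    ⟨_, Set.iUnion_vecCons_compl _, condA_closedNbhd_compl G (Order.add_one_le_of_lt hx)⟩
end

section
/- If P is a graph with diam(P) ≥ 4 and r(P) ≥ 3, then there exists a covering of P of size 2 satisfying both conditions A and B, i.e., cov_AB(P) = 2. -/
/-
Pick `x, y` with `d(x, y) ≥ 4` and call `v, w` far apart when `d(v, w) ≥ 3`; since `r(P) ≥ 3`,
every vertex has a far vertex. Start with `A = N[x]`, `B = N[y]`: each vertex of one side has a
far vertex (`y`, resp. `x`) on the other. A vertex not yet placed can always be added, opposite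
a far vertex already placed or together with a far vertex of its own on the other side, so by
Zorn's lemma this extends to a partition `{A, B}` of all of `P` with the same property, which is
condition B. Condition A holds because `N[y] ⊆ B` and `N[x] ⊆ A`. Finally no covering by fewer than two sets satisfies condition A.
-/

open SimpleGraph

variable {V : Type*} {ι : Type*}

namespace SimpleGraph

variable {H : SimpleGraph V}

structure IsMutuallyDominating (H : SimpleGraph V) (A B : Set V) : Prop where
  disjoint : Disjoint A B
  dominates_left : ∀ v ∈ A, ∃ w ∈ B, H.Adj v w
  dominates_right : ∀ v ∈ B, ∃ w ∈ A, H.Adj v w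

namespace IsMutuallyDominating

variable {A B A₁ B₁ A₂ B₂ : Set V}

theorem of_adj {a b : V} (h : H.Adj a b) : H.IsMutuallyDominating {a} {b} where
  disjoint := Set.disjoint_singleton.mpr h.ne
  dominates_left _ hv := ⟨b, rfl, hv ▸ h⟩
  dominates_right _ hv := ⟨a, rfl, hv ▸ h.symm⟩

theorem union (h₁ : H.IsMutuallyDominating A₁ B₁) (h₂ : H.IsMutuallyDominating A₂ B₂)
    (hd : Disjoint (A₁ ∪ A₂) (B₁ ∪ B₂)) : H.IsMutuallyDominating (A₁ ∪ A₂) (B₁ ∪ B₂) where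
  disjoint := hd
  dominates_left v hv := by
    rcases hv with hv | hv
    · obtain ⟨w, hw, hvw⟩ := h₁.dominates_left v hv; exact ⟨w, .inl hw, hvw⟩
    · obtain ⟨w, hw, hvw⟩ := h₂.dominates_left v hv; exact ⟨w, .inr hw, hvw⟩
  dominates_right v hv := by
    rcases hv with hv | hv
    · obtain ⟨w, hw, hvw⟩ := h₁.dominates_right v hv; exact ⟨w, .inl hw, hvw⟩
    · obtain ⟨w, hw, hvw⟩ := h₂.dominates_right v hv; exact ⟨w, .inr hw, hvw⟩

theorem exists_extend (hH : ∀ v, ∃ w, H.Adj v w) (h : H.IsMutuallyDominating A B) {u : V}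
    (hu : u ∉ A ∪ B) :
    ∃ a b, u ∈ ({a, b} : Set V) ∧ H.IsMutuallyDominating (A ∪ {a}) (B ∪ {b}) := by
  rw [Set.mem_union, not_or] at hu
  by_cases hA : ∃ s ∈ A, H.Adj s u
  · obtain ⟨s, hs, hsu⟩ := hA
    refine ⟨s, u, by simp, h.union (of_adj hsu) ?_⟩
    rw [Set.union_eq_left.mpr (Set.singleton_subset_iff.mpr hs), Set.disjoint_union_right]
    exact ⟨h.disjoint, Set.disjoint_singleton_right.mpr hu.1⟩
  by_cases hB : ∃ s ∈ B, H.Adj u s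
  · obtain ⟨s, hs, hus⟩ := hB
    refine ⟨u, s, by simp, h.union (of_adj hus) ?_⟩
    rw [Set.union_eq_left.mpr (Set.singleton_subset_iff.mpr hs), Set.disjoint_union_left]
    exact ⟨h.disjoint, Set.disjoint_singleton_left.mpr hu.2⟩
  obtain ⟨w, huw⟩ := hH u
  have hwA : w ∉ A := fun hw => hA ⟨w, hw, huw.symm⟩
  have hwB : w ∉ B := fun hw => hB ⟨w, hw, huw⟩
  refine ⟨u, w, by simp, h.union (of_adj huw) ?_⟩
  simp [h.disjoint, hwA, hu.2, huw.ne.symm]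

theorem sSup_of_isChain {c : Set (Set V × Set V)}
    (hcs : ∀ p ∈ c, H.IsMutuallyDominating p.1 p.2) (hc : IsChain (· ≤ ·) c) :
    H.IsMutuallyDominating (sSup c).1 (sSup c).2 := by
  have mem_fst : ∀ v, v ∈ (sSup c).1 ↔ ∃ p ∈ c, v ∈ p.1 := by simp [Prod.fst_sSup]
  have mem_snd : ∀ v, v ∈ (sSup c).2 ↔ ∃ p ∈ c, v ∈ p.2 := by simp [Prod.snd_sSup]
  refine ⟨Set.disjoint_left.mpr fun v hv₁ hv₂ => ?_, fun v hv => ?_, fun v hv => ?_⟩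
  · obtain ⟨p, hp, hvp⟩ := (mem_fst v).mp hv₁
    obtain ⟨q, hq, hvq⟩ := (mem_snd v).mp hv₂
    rcases hc.total hp hq with hpq | hqp
    · exact (hcs q hq).disjoint.notMem_of_mem_left (hpq.1 hvp) hvq
    · exact (hcs p hp).disjoint.notMem_of_mem_left hvp (hqp.2 hvq)
  · obtain ⟨p, hp, hvp⟩ := (mem_fst v).mp hv
    obtain ⟨w, hw, hvw⟩ := (hcs p hp).dominates_left v hvp
    exact ⟨w, (mem_snd w).mpr ⟨p, hp, hw⟩, hvw⟩
  · obtain ⟨p, hp, hvp⟩ := (mem_snd v).mp hv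
    obtain ⟨w, hw, hvw⟩ := (hcs p hp).dominates_right v hvp
    exact ⟨w, (mem_fst w).mpr ⟨p, hp, hw⟩, hvw⟩

theorem exists_union_eq_univ (hH : ∀ v, ∃ w, H.Adj v w) (h : H.IsMutuallyDominating A B) :
    ∃ A' B', A ⊆ A' ∧ B ⊆ B' ∧ H.IsMutuallyDominating A' B' ∧ A' ∪ B' = Set.univ := by
  obtain ⟨⟨A', B'⟩, ⟨hA, hB⟩, hmax⟩ := zorn_le_nonempty₀
    {p : Set V × Set V | H.IsMutuallyDominating p.1 p.2}
    (fun c hcs hc _ _ => ⟨sSup c, sSup_of_isChain hcs hc, fun _ hp => le_sSup hp⟩) (A, B) h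
  refine ⟨A', B', hA, hB, hmax.prop, Set.eq_univ_of_forall fun u => by_contra fun hu => ?_⟩
  obtain ⟨a, b, hab, hext⟩ := hmax.prop.exists_extend hH hu
  have hle := hmax.le_of_ge (y := (A' ∪ {a}, B' ∪ {b})) hext
    ⟨Set.subset_union_left, Set.subset_union_left⟩
  rcases hab with rfl | rfl
  · exact hu (.inl (hle.1 (.inr rfl)))
  · exact hu (.inr (hle.2 (.inr rfl)))

end IsMutuallyDominating

def farGraph (G : SimpleGraph V) : SimpleGraph V where
  Adj v w := 3 ≤ G.edist v w
  symm := ⟨fun v w (h : 3 ≤ G.edist v w) => by rwa [edist_comm]⟩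
  loopless := ⟨fun v (h : 3 ≤ G.edist v v) => by simp at h⟩

@[simp]
theorem farGraph_adj {G : SimpleGraph V} {v w : V} : G.farGraph.Adj v w ↔ 3 ≤ G.edist v w :=
  Iff.rfl

end SimpleGraph

variable {G : SimpleGraph V}

theorem exists_lt_edist_of_lt_gdiam {n : ℕ∞} (h : n < gdiam G) : ∃ x y, n < G.edist x y := by
  simpa [gdiam, gecc, lt_iSup_iff] using h

theorem exists_lt_edist_of_lt_grad {n : ℕ∞} (h : n < grad G) (v : V) : ∃ w, n < G.edist v w := by
  simpa [gecc, lt_iSup_iff] using h.trans_le (iInf_le _ v)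

theorem three_le_edist_of_edist_le_one {x y v : V} (hxy : 3 < G.edist x y)
    (hv : G.edist x v ≤ 1) : 3 ≤ G.edist v y := by
  have htri := G.edist_triangle (u := x) (v := v) (w := y)
  generalize G.edist x y = a, G.edist x v = b, G.edist v y = c at *
  enat_to_nat
  omega

theorem isMutuallyDominating_farGraph_closedBalls {x y : V} (hxy : 3 < G.edist x y) :
    G.farGraph.IsMutuallyDominating {v | G.edist x v ≤ 1} {v | G.edist y v ≤ 1} where
  disjoint := Set.disjoint_left.mpr fun v hx hy => by
    have h₁ := three_le_edist_of_edist_le_one hxy hx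
    have h₂ : G.edist v y ≤ 1 := G.edist_comm ▸ hy
    exact absurd (h₁.trans h₂) (by decide)
  dominates_left v hv := ⟨y, by simp, three_le_edist_of_edist_le_one hxy hv⟩
  dominates_right v hv :=
    ⟨x, by simp, three_le_edist_of_edist_le_one (G.edist_comm ▸ hxy) hv⟩

theorem notMem_and_two_le_edist {A B : Set V} {y : V} (hAB : Disjoint A B)
    (hy : {v | G.edist y v ≤ 1} ⊆ B) : y ∉ A ∧ ∀ q ∈ A, 2 ≤ G.edist q y := by
  refine ⟨hAB.notMem_of_mem_right (hy (by simp)), fun q hq => le_of_not_gt fun hlt => ?_⟩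
  refine hAB.notMem_of_mem_left hq (hy ?_)
  have hyq : G.edist y q < 2 := G.edist_comm ▸ hlt
  show G.edist y q ≤ 1
  generalize G.edist y q = a at *
  enat_to_nat
  omega

theorem condA_pair {A B : Set V} {x y : V} (hAB : Disjoint A B) (hx : {v | G.edist x v ≤ 1} ⊆ A)
    (hy : {v | G.edist y v ≤ 1} ⊆ B) : CondA G ![A, B] := by
  intro i
  fin_cases i
  · exact ⟨y, notMem_and_two_le_edist hAB hy⟩
  · exact ⟨x, notMem_and_two_le_edist hAB.symm hx⟩

theorem condB_pair {A B : Set V} (h : G.farGraph.IsMutuallyDominating A B) :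
    CondB G ![A, B] := by
  intro i p hp
  fin_cases i
  · obtain ⟨w, hw, hpw⟩ := h.dominates_left p hp
    exact .inl ⟨w, h.disjoint.notMem_of_mem_right hw, hpw⟩
  · obtain ⟨w, hw, hpw⟩ := h.dominates_right p hp
    exact .inl ⟨w, h.disjoint.notMem_of_mem_left hw, hpw⟩

theorem nontrivial_of_iUnion_eq_univ_of_condA [Nonempty V] {P : ι → Set V}
    (hcov : ⋃ i, P i = Set.univ) (hA : CondA G P) : Nontrivial ι := by
  obtain ⟨i, -⟩ := Set.mem_iUnion.mp (hcov ▸ Set.mem_univ (Classical.arbitrary V))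
  obtain ⟨p, hp, -⟩ := hA i
  obtain ⟨j, hj⟩ := Set.mem_iUnion.mp (hcov ▸ Set.mem_univ p)
  exact ⟨⟨j, i, fun h => hp (h ▸ hj)⟩⟩

theorem covAB_eq_two [Nonempty V]
    (h : ∃ P : Fin 2 → Set V, (⋃ i, P i) = Set.univ ∧ CondA G P ∧ CondB G P) : covAB G = 2 :=
  le_antisymm (Nat.sInf_le h) <| le_csInf ⟨2, h⟩ fun _ ⟨_, hcov, hA, _⟩ =>
    Fin.nontrivial_iff_two_le.mp (nontrivial_of_iUnion_eq_univ_of_condA hcov hA)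

theorem stmt15_general (G : SimpleGraph V) (hd : 4 ≤ gdiam G) (hr : 3 ≤ grad G) :
    (∃ P : Fin 2 → Set V, (⋃ i, P i) = Set.univ ∧ CondA G P ∧ CondB G P) ∧
    covAB G = 2 := by
  obtain ⟨x, y, hxy⟩ :=
    exists_lt_edist_of_lt_gdiam (n := 3) ((ENat.add_one_le_iff (by decide)).mp hd)
  have hfar (v : V) : ∃ w, G.farGraph.Adj v w :=
    (exists_lt_edist_of_lt_grad (n := 2) ((ENat.add_one_le_iff (by decide)).mp hr) v).imp
      fun _ h => farGraph_adj.mpr (Order.add_one_le_of_lt h)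
  obtain ⟨A, B, hA, hB, hAB, huniv⟩ :=
    (isMutuallyDominating_farGraph_closedBalls hxy).exists_union_eq_univ hfar
  have hcov : (⋃ i, ![A, B] i) = Set.univ := by
    rw [← huniv]
    ext
    simp [Fin.exists_fin_two]
  have hP : ∃ P : Fin 2 → Set V, (⋃ i, P i) = Set.univ ∧ CondA G P ∧ CondB G P :=
    ⟨![A, B], hcov, condA_pair hAB.disjoint hA hB, condB_pair hAB⟩
  have : Nonempty V := ⟨x⟩
  exact ⟨hP, covAB_eq_two hP⟩

/-- If `diam(P) ≥ 4` and `r(P) ≥ 3` then there is a covering of size 2 satisfying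
conditions A and B, i.e. `cov_AB(P) = 2`. -/
theorem stmt15 [Fintype V] (G : SimpleGraph V) (hd : 4 ≤ gdiam G) (hr : 3 ≤ grad G) :
    (∃ P : Fin 2 → Set V, (⋃ i, P i) = Set.univ ∧ CondA G P ∧ CondB G P) ∧
    covAB G = 2 :=
  stmt15_general G hd hr
end

section
/- If P is a graph with r(P) = 2, then no covering of P of size 2 satisfies both conditions A and B; i.e., cov_AB(P) ≠ 2. -/
open SimpleGraph

variable {V : Type*} {ι : Type*}

/-- If `r(P) = 2` then no covering of size 2 satisfies conditions A and B, i.e.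
`cov_AB(P) ≠ 2`. -/
theorem stmt16 (G : SimpleGraph V) (hr : grad G = 2) :
    (∀ P : Fin 2 → Set V, (⋃ i, P i) = Set.univ → ¬(CondA G P ∧ CondB G P)) ∧
    covAB G ≠ 2 := by
  -- first obtain a center vertex c with eccentricity 2
  have hlt : grad G < 3 := by rw [hr]; decide
  obtain ⟨c, hc⟩ : ∃ c, gecc G c < 3 := by
    rw [grad] at hlt; exact iInf_lt_iff.mp hlt
  have hge : (2 : ℕ∞) ≤ gecc G c := hr ▸ iInf_le _ c
  have hecc : gecc G c = 2 := le_antisymm ((ENat.lt_add_one_iff (by decide)).mp (by exact_mod_cast hc)) hge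
  have hle2 : ∀ u, G.edist c u ≤ 2 := fun u => hecc ▸ le_iSup (fun u => G.edist c u) u
  have main : ∀ P : Fin 2 → Set V, (⋃ i, P i) = Set.univ → ¬(CondA G P ∧ CondB G P) := by
    rintro P hcov ⟨hA, hB⟩
    have hmem : ∀ v : V, ∃ i, v ∈ P i := by
      intro v
      have : v ∈ ⋃ i, P i := hcov ▸ Set.mem_univ v
      simpa using this
    obtain ⟨i, hci⟩ := hmem c
    -- apply condition B at c
    obtain ⟨p', hp', h3⟩ | ⟨j, hji, hBj⟩ := hB i c hci
    · have := hle2 p'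
      have : (3 : ℕ∞) ≤ 2 := h3.trans this
      exact absurd this (by decide)
    · -- apply condition A at i
      obtain ⟨p, hpni, hAi⟩ := hA i
      have hpj : p ∈ P j := by
        obtain ⟨k, hk⟩ := hmem p
        have hki : k ≠ i := fun h => hpni (h ▸ hk)
        have : k = j := by omega
        exact this ▸ hk
      have hcp2 : G.edist c p = 2 := le_antisymm (hle2 p) (hBj p hpj)
      obtain ⟨W, hW⟩ := G.exists_walk_of_edist_ne_top (by rw [hcp2]; decide)
      have hWlen : W.length = 2 := by
        have := hW.trans hcp2
        exact_mod_cast this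
      set x := W.getVert 1 with hx
      have hadj1 : G.Adj c x := by
        have := W.adj_getVert_succ (i := 0) (by omega)
        simpa using this
      have hadj2 : G.Adj x p := by
        have := W.adj_getVert_succ (i := 1) (by omega)
        have h2 : W.getVert 2 = p := by
          rw [← hWlen]; exact W.getVert_length
        rwa [h2] at this
      have hcx : G.edist c x = 1 := edist_eq_one_iff_adj.mpr hadj1
      have hxp : G.edist x p = 1 := edist_eq_one_iff_adj.mpr hadj2
      obtain ⟨k, hxk⟩ := hmem x
      rcases eq_or_ne k j with rfl | hkj
      · have := hBj x hxk
        rw [hcx] at this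
        exact absurd this (by decide)
      · have hki : k = i := by omega
        have := hAi x (hki ▸ hxk)
        rw [hxp] at this
        exact absurd this (by decide)
  refine ⟨main, ?_⟩
  intro h2
  have hne : {k | ∃ P : Fin k → Set V, (⋃ i, P i) = Set.univ ∧ CondA G P ∧ CondB G P}.Nonempty := by
    by_contra hemp
    rw [Set.not_nonempty_iff_eq_empty] at hemp
    rw [covAB, hemp, Nat.sInf_empty] at h2
    exact absurd h2 (by norm_num)
  have := Nat.sInf_mem hne
  rw [← covAB, h2] at this
  obtain ⟨P, hcov, hAB⟩ := this
  exact main P hcov hAB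
end

section
/- A graph P admits a covering of size 2 satisfying conditions A' and B' if and only if P is disconnected. -/
open SimpleGraph

variable {V : Type*} {ι : Type*}

/-!
Condition B′ for two parts says that every vertex of one part is at distance at least 2 from
every vertex of the other. Such parts are disjoint and no edge joins them, so a walk from one
part to the other would have to leave the first part along an edge landing in the second:
the graph is disconnected. Conversely, the component of a vertex and its complement are at
infinite distance from each other, so they satisfy both conditions.
-/

namespace SimpleGraph

variable {G : SimpleGraph V}

lemma not_preconnected_of_two_le_edist {A B : Set V} (hA : A.Nonempty) (hB : B.Nonempty)
    (hcover : ∀ v, v ∈ A ∨ v ∈ B) (hsep : ∀ p ∈ A, ∀ q ∈ B, 2 ≤ G.edist p q) :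
    ¬G.Preconnected := by
  intro hconn
  obtain ⟨a, ha⟩ := hA
  obtain ⟨b, hb⟩ := hB
  have hbA : b ∉ A := fun hbA => by simpa using hsep b hbA b hb
  obtain ⟨d, -, hdA, hdA'⟩ := (hconn a b).some.exists_boundary_dart A ha hbA
  have hdB : d.snd ∈ B := (hcover d.snd).resolve_left hdA'
  have h2 := hsep _ hdA _ hdB
  rw [edist_eq_one_iff_adj.mpr d.adj] at h2
  exact absurd h2 (by norm_num)

lemma two_le_edist_of_reachable_of_not_reachable {u p q : V} (hp : G.Reachable u p)
    (hq : ¬G.Reachable u q) : 2 ≤ G.edist p q := by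
  rw [edist_eq_top_of_not_reachable fun hpq => hq (hp.trans hpq)]
  exact le_top

end SimpleGraph

section FinTwo

variable {G : SimpleGraph V} {P : Fin 2 → Set V}

lemma condB'_fin_two_iff :
    CondB' G P ↔ ∀ p ∈ P 0, ∀ q ∈ P 1, 2 ≤ G.edist p q := by
  constructor
  · intro hB p hp q hq
    obtain ⟨j, hj, hsep⟩ := hB 0 p hp
    obtain rfl : j = 1 := by omega
    exact hsep q hq
  · intro hsep i p hp
    fin_cases i
    · exact ⟨1, by decide, hsep p hp⟩
    · exact ⟨0, by decide, fun q hq => G.edist_comm ▸ hsep q hq p hp⟩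

lemma condA'_fin_two_of_two_le_edist (hsep : ∀ p ∈ P 0, ∀ q ∈ P 1, 2 ≤ G.edist p q) :
    CondA' G P := by
  intro i
  refine Or.inr ?_
  fin_cases i
  · exact ⟨1, by decide, hsep⟩
  · exact ⟨0, by decide, fun q hq q' hq' => G.edist_comm ▸ hsep q' hq' q hq⟩

end FinTwo

/-- A graph admits a covering of size 2 (with nonempty parts) satisfying conditions A′ and
B′ if and only if it is disconnected. -/
theorem stmt18 [Nonempty V] (G : SimpleGraph V) :
    (∃ P : Fin 2 → Set V, (∀ i, (P i).Nonempty) ∧ (⋃ i, P i) = Set.univ ∧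
      CondA' G P ∧ CondB' G P) ↔ ¬G.Connected := by
  constructor
  · rintro ⟨P, hne, hcover, -, hB⟩ hconn
    have hcover' (v : V) : v ∈ P 0 ∨ v ∈ P 1 :=
      Fin.exists_fin_two.mp (Set.mem_iUnion.mp (hcover ▸ Set.mem_univ v))
    exact not_preconnected_of_two_le_edist (hne 0) (hne 1) hcover' (condB'_fin_two_iff.mp hB)
      hconn.preconnected
  · intro hdisconn
    obtain ⟨u, v, huv⟩ : ∃ u v, ¬G.Reachable u v := by
      simpa [Preconnected] using fun h => hdisconn (connected_iff G |>.mpr ⟨h, ‹_›⟩)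
    let P : Fin 2 → Set V := ![{x | G.Reachable u x}, {x | ¬G.Reachable u x}]
    have hsep : ∀ p ∈ P 0, ∀ q ∈ P 1, 2 ≤ G.edist p q := fun p hp q hq =>
      two_le_edist_of_reachable_of_not_reachable hp hq
    refine ⟨P, Fin.forall_fin_two.mpr ⟨⟨u, Reachable.refl u⟩, ⟨v, huv⟩⟩, ?_,
      condA'_fin_two_of_two_le_edist hsep, condB'_fin_two_iff.mpr hsep⟩
    exact Set.eq_univ_of_forall fun x => by simpa [P, Fin.exists_fin_two] using em _
end
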